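/- Let ū ∈ W̃^𝒞 be an admissible tuple and let ψ ∈ Ψ. Then there exists m ∈ ℕ such that for every m-regular admissible tuple w̄ ∈ W̃^𝒞 and every μ ∈ Λ satisfying μu_C ≤_{C^ψ} w_C for every chamber C with ψ ∈ Ψ_C, one has μu_C ≤_C w_C for every chamber C ∈ 𝒞. -/

import Mathlib

open scoped Classical

noncomputable section

/-- A (reduced, crystallographic) root system `Φ` in the dual of a real vector space `V`,
together with a chosen coroot `α̌ ∈ V` for every root `α`. -/
structure RootSystemData (V : Type*) [AddCommGroup V] [Module ℝ V] where
  roots : Set (Module.Dual ℝ V)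
  coroot : Module.Dual ℝ V → V
  finite : roots.Finite
  ne_zero : ∀ α ∈ roots, α ≠ 0
  root_coroot_two : ∀ α ∈ roots, α (coroot α) = 2
  reflect_mem : ∀ α ∈ roots, ∀ β ∈ roots, β - β (coroot α) • α ∈ roots
  crystallographic : ∀ α ∈ roots, ∀ β ∈ roots, ∃ n : ℤ, β (coroot α) = (n : ℝ)
  reduced : ∀ α ∈ roots, ∀ c : ℝ, c • α ∈ roots → c = 1 ∨ c = -1
  span_top : Submodule.span ℝ roots = ⊤

section
variable {V : Type*} [AddCommGroup V] [Module ℝ V]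

/-- The simple elements of a positive system `P`: elements which are not sums of two
elements of `P`. -/
def simplesOf (P : Set (Module.Dual ℝ V)) : Set (Module.Dual ℝ V) :=
  {α | α ∈ P ∧ ¬∃ β ∈ P, ∃ γ ∈ P, α = β + γ}

/-- The affine root `(α, n)` viewed as the affine function `x ↦ α(x) + n`. -/
def aev (α : Module.Dual ℝ V) (n : ℤ) : V → ℝ := fun x => α x + (n : ℝ)

/-- `π : W̃ → Λ`, `w ↦ w(0)`. -/
def piL (w : Equiv.Perm V) : V := w 0

/-- Translation by `μ`, as an element of the group of permutations of `V`. -/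
def transl (μ : V) : Equiv.Perm V := Equiv.addLeft μ

end

namespace RootSystemData

variable {V : Type*} [AddCommGroup V] [Module ℝ V]

variable (RS : RootSystemData V)

/-- A point is regular if it lies on no root hyperplane. -/
def IsRegularPt (x : V) : Prop := ∀ α ∈ RS.roots, α x ≠ 0

/-- Weyl chambers of `Φ`: connected components of the set of regular points,
described by the strict sign pattern of a regular point. -/
def IsChamber (C : Set V) : Prop :=
  ∃ v, RS.IsRegularPt v ∧ C = {x | ∀ α ∈ RS.roots, 0 < α v → 0 < α x}

/-- The type `𝒞` of Weyl chambers. -/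
abbrev ChamberT := {C : Set V // RS.IsChamber C}

/-- The set `Φ_C` of `C`-positive roots. -/
def pos (C : Set V) : Set (Module.Dual ℝ V) := {α | α ∈ RS.roots ∧ ∀ x ∈ C, 0 < α x}

/-- The set `Δ_C` of `C`-simple roots. -/
def simples (C : Set V) : Set (Module.Dual ℝ V) := simplesOf (RS.pos C)

/-- The affine reflection `s_{(α,n)} : x ↦ x − (α(x)+n) • α̌`. -/
def sAff (α : Module.Dual ℝ V) (n : ℤ) : Equiv.Perm V :=
  if h : α (RS.coroot α) = 2 then
    Function.Involutive.toPerm (fun x => x - (α x + (n : ℝ)) • RS.coroot α) (by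
      intro x
      simp only [map_sub, map_smul, smul_eq_mul, h]
      match_scalars <;> ring)
  else Equiv.refl V

/-- Positivity of an affine function `f` (which is required to be an affine root
`(α,n)`), relative to a positive system `P ⊂ Φ`:  `n > 0`, or `n = 0 ∧ α ∈ P`. -/
def IsPosAff (P : Set (Module.Dual ℝ V)) (f : V → ℝ) : Prop :=
  ∃ α ∈ RS.roots, ∃ n : ℤ, f = aev α n ∧ (0 < n ∨ (n = 0 ∧ α ∈ P))

/-- The subgroup of the affine Weyl group generated by the reflections `s_{(α,n)}`
with `α ∈ Φ ∩ Φ'`. -/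
def affWeylOf (Φ' : Set (Module.Dual ℝ V)) : Subgroup (Equiv.Perm V) :=
  Subgroup.closure {g | ∃ α ∈ RS.roots ∩ Φ', ∃ n : ℤ, g = RS.sAff α n}

/-- The affine Weyl group `W̃ = W ⋉ Λ`, realized as the group generated by all affine
reflections `s_{(α,n)}`. -/
def affWeyl : Subgroup (Equiv.Perm V) := RS.affWeylOf Set.univ

/-- The finite Weyl group `W`, generated by the linear reflections `s_α = s_{(α,0)}`. -/
def weyl : Subgroup (Equiv.Perm V) :=
  Subgroup.closure {g | ∃ α ∈ RS.roots, g = RS.sAff α 0}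

/-- The subgroup `W̃_α` generated by the reflections `s_{(α,n)}`, `n ∈ ℤ`. -/
def reflSubgroup (α : Module.Dual ℝ V) : Subgroup (Equiv.Perm V) :=
  Subgroup.closure {g | ∃ n : ℤ, g = RS.sAff α n}

/-- The coroot lattice `Λ ⊂ V`. -/
def corootLattice : AddSubgroup V := AddSubgroup.closure (RS.coroot '' RS.roots)

/-- The (open) fundamental alcove `A₀ ⊂ C₀`, whose closure contains `0`. -/
def alcove (C₀ : Set V) : Set V := {x | ∀ α ∈ RS.pos C₀, 0 < α x ∧ α x < 1}

/-- `w ∈ C`, i.e. `w(A₀) ⊂ C`. -/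
def MemC (C₀ : Set V) (w : Equiv.Perm V) (C : Set V) : Prop :=
  ∀ x ∈ RS.alcove C₀, w x ∈ C

/-- The inversion set of `w`: positive affine roots `f` with `w⁻¹(f) = f ∘ w`
negative. -/
def invSet (P : Set (Module.Dual ℝ V)) (w : Equiv.Perm V) : Set (V → ℝ) :=
  {f | RS.IsPosAff P f ∧ ¬ RS.IsPosAff P (fun x => f (w x))}

/-- The length function `l` on `W̃` determined by the fundamental alcove:
the number of inversions. -/
def len (C₀ : Set V) (w : Equiv.Perm V) : ℕ := (RS.invSet (RS.pos C₀) w).ncard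

/-- The (strict) Bruhat order on `W̃`: the transitive closure of
`x < s_{(α,n)} x` whenever the length increases. -/
def bruhatLT (C₀ : Set V) : Equiv.Perm V → Equiv.Perm V → Prop :=
  Relation.TransGen (fun x y =>
    (∃ α ∈ RS.roots, ∃ n : ℤ, y = RS.sAff α n * x) ∧ RS.len C₀ x < RS.len C₀ y)

/-- The Bruhat order `≤` on `W̃`. -/
def bruhatLE (C₀ : Set V) (x y : Equiv.Perm V) : Prop := x = y ∨ RS.bruhatLT C₀ x y

/-- One step of the ordering `<_{Φ'}`:  `x = s_{(α,n)} y <_{(α,n)} y` with `α ∈ Φ'`,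
i.e. `y⁻¹((α,n)) > 0` (positivity of affine roots relative to `P`). -/
def stepRel (P Φ' : Set (Module.Dual ℝ V)) (x y : Equiv.Perm V) : Prop :=
  ∃ α ∈ RS.roots ∩ Φ', ∃ n : ℤ,
    x = RS.sAff α n * y ∧ RS.IsPosAff P (fun v => aev α n (y v))

/-- The ordering `<_{Φ'}` on `W̃` (with affine-root positivity relative to `P`). -/
def ordLT (P Φ' : Set (Module.Dual ℝ V)) : Equiv.Perm V → Equiv.Perm V → Prop :=
  Relation.TransGen (RS.stepRel P Φ')

/-- The ordering `≤_{Φ'}` on `W̃`. -/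
def ordLE (P Φ' : Set (Module.Dual ℝ V)) (x y : Equiv.Perm V) : Prop :=
  x = y ∨ RS.ordLT P Φ' x y

/-- The ordering `<_{Φ'}` on `V`: `x <_{Φ'} y` iff `y − x` is a positive linear
combination of coroots `α̌` with `α ∈ Φ'`. -/
def vecLT (Φ' : Set (Module.Dual ℝ V)) (x y : V) : Prop :=
  ∃ s : Finset (Module.Dual ℝ V), ∃ c : Module.Dual ℝ V → ℝ,
    s.Nonempty ∧ (∀ α ∈ s, α ∈ RS.roots ∩ Φ' ∧ 0 < c α) ∧
      y - x = ∑ α ∈ s, c α • RS.coroot α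

/-- The ordering `≤_{Φ'}` on `V`. -/
def vecLE (Φ' : Set (Module.Dual ℝ V)) (x y : V) : Prop := x = y ∨ RS.vecLT Φ' x y

/-- `ψ` is the fundamental weight of the chamber `C` corresponding to the simple root
`α ∈ Δ_C`:  `⟨ψ, β̌⟩ = δ_{αβ}` for `β ∈ Δ_C`. -/
def PairsIn (C : Set V) (ψ α : Module.Dual ℝ V) : Prop :=
  α ∈ RS.simples C ∧ ∀ β ∈ RS.simples C, ψ (RS.coroot β) = if β = α then 1 else 0

/-- `ψv` is the fundamental coweight of the chamber `C` corresponding to the simple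
root `α ∈ Δ_C`:  `⟨β, ψv⟩ = δ_{αβ}` for `β ∈ Δ_C`. -/
def CoPairsIn (C : Set V) (α : Module.Dual ℝ V) (ψv : V) : Prop :=
  α ∈ RS.simples C ∧ ∀ β ∈ RS.simples C, β ψv = if β = α then 1 else 0

/-- `ψ ∈ Ψ_C` with corresponding fundamental coweight `ψ̌ = ψv`. -/
def IsFundPair (C : Set V) (ψ : Module.Dual ℝ V) (ψv : V) : Prop :=
  ∃ α, RS.PairsIn C ψ α ∧ RS.CoPairsIn C α ψv

/-- `ψ ∈ Ψ_C`. -/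
def IsFundWeightOf (C : Set V) (ψ : Module.Dual ℝ V) : Prop := ∃ α, RS.PairsIn C ψ α

/-- `Φ(ψ) = {α ∈ Φ : ⟨α, ψ̌⟩ ≥ 0}` (described via the coweight `ψv = ψ̌`). -/
def phiNonneg (ψv : V) : Set (Module.Dual ℝ V) := {α | α ∈ RS.roots ∧ 0 ≤ α ψv}

/-- `Φ^ψ = {α ∈ Φ : ⟨α, ψ̌⟩ = 0}` (described via the coweight `ψv = ψ̌`). -/
def phiZero (ψv : V) : Set (Module.Dual ℝ V) := {α | α ∈ RS.roots ∧ α ψv = 0}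

/-- The set `W̃_ψ` of `w ∈ W̃` with `w⁻¹(Φ̃^ψ_{>0}) ⊂ Φ̃_{>0}`; here `Φψ = Φ^ψ`,
`P` is the chosen positive system of `Φ^ψ` and `C₀` determines `Φ̃_{>0}`. -/
def WpsiSet (C₀ : Set V) (Φψ P : Set (Module.Dual ℝ V)) : Set (Equiv.Perm V) :=
  {w | ∀ α ∈ RS.roots ∩ Φψ, ∀ n : ℤ, (0 < n ∨ (n = 0 ∧ α ∈ P)) →
      RS.IsPosAff (RS.pos C₀) (fun v => aev α n (w v))}

/-- Admissibility of a tuple `w̄ ∈ W̃^𝒞`: `w_{s_α(C)} ≤_α w_C` for all `C ∈ 𝒞`,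
`α ∈ Δ_C`. -/
def AdmissibleW (C₀ : Set V) (w : RS.ChamberT → Equiv.Perm V) : Prop :=
  ∀ C : RS.ChamberT, ∀ α ∈ RS.simples C.1, ∀ C' : RS.ChamberT,
    C'.1 = ⇑(RS.sAff α 0) '' C.1 → RS.ordLE (RS.pos C₀) {α} (w C') (w C)

/-- Quasi-admissibility of a tuple `w̄ ∈ W̃^𝒞`: `w_{s_α(C)} ∈ W̃_α w_C`. -/
def QuasiAdmissibleW (w : RS.ChamberT → Equiv.Perm V) : Prop :=
  ∀ C : RS.ChamberT, ∀ α ∈ RS.simples C.1, ∀ C' : RS.ChamberT,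
    C'.1 = ⇑(RS.sAff α 0) '' C.1 → ∃ u ∈ RS.reflSubgroup α, w C' = u * w C

/-- Admissibility of a tuple `μ̄ ∈ V^𝒞`: `μ_C − μ_{s_α(C)} ∈ ℝ_{≥0} α̌`. -/
def AdmissibleV (μ : RS.ChamberT → V) : Prop :=
  ∀ C : RS.ChamberT, ∀ α ∈ RS.simples C.1, ∀ C' : RS.ChamberT,
    C'.1 = ⇑(RS.sAff α 0) '' C.1 → ∃ c : ℝ, 0 ≤ c ∧ μ C - μ C' = c • RS.coroot α

/-- Quasi-admissibility of a tuple `μ̄ ∈ V^𝒞`: `μ_C − μ_{s_α(C)} ∈ ℝ α̌`. -/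
def QuasiAdmissibleV (μ : RS.ChamberT → V) : Prop :=
  ∀ C : RS.ChamberT, ∀ α ∈ RS.simples C.1, ∀ C' : RS.ChamberT,
    C'.1 = ⇑(RS.sAff α 0) '' C.1 → ∃ c : ℝ, μ C - μ C' = c • RS.coroot α

/-- `m`-regularity of a tuple `μ̄ ∈ V^𝒞`: `⟨α, μ_C⟩ ≥ m` for every `C ∈ 𝒞` and
`α ∈ Φ_C`. -/
def RegularVAt (m : ℝ) (μ : RS.ChamberT → V) : Prop :=
  ∀ C : RS.ChamberT, ∀ α ∈ RS.pos C.1, m ≤ α (μ C)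

/-- `m`-regularity of a tuple `w̄ ∈ W̃^𝒞`. -/
def RegularWAt (m : ℝ) (w : RS.ChamberT → Equiv.Perm V) : Prop :=
  RS.RegularVAt m (fun C => piL (w C))

/-- Regularity of a tuple `μ̄ ∈ V^𝒞`. -/
def RegularV (μ : RS.ChamberT → V) : Prop := ∃ m : ℝ, 0 < m ∧ RS.RegularVAt m μ

/-- Regularity of a tuple `w̄ ∈ W̃^𝒞`. -/
def RegularW (w : RS.ChamberT → Equiv.Perm V) : Prop := ∃ m : ℝ, 0 < m ∧ RS.RegularWAt m w

/-- `e` is the quasi-admissible tuple `ē_ψ` corresponding to the standard basis vector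
`e_ψ ∈ ℤ^Ψ`:  `(ē_ψ)_C = α̌` if `α ∈ Δ_C` corresponds to `ψ ∈ Ψ_C`, and `= 0` if
`ψ ∉ Ψ_C`. -/
def IsEPsiTuple (ψ : Module.Dual ℝ V) (e : RS.ChamberT → V) : Prop :=
  ∀ C : RS.ChamberT,
    (∀ α, RS.PairsIn C.1 ψ α → e C = RS.coroot α) ∧
      ((¬∃ α, RS.PairsIn C.1 ψ α) → e C = 0)

end RootSystemData

/-!
Fix a chamber `C`. Crossing only walls of roots in `Φ^ψ`, whose reflections fix `ψ` and `ψ̌`, one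
reaches from a chamber of `ψ` a chamber `D` of `ψ` with `Φ_D ∩ Φ^ψ = Φ_C ∩ Φ^ψ`, so the hypothesis
at `D` gives `μ u_D ≤_C w_D`. Then walk from `C` to `D` through walls of roots `δ ∈ Φ_C`. Across
the wall between `E` and `E' = s_δ E`, admissibility makes `w_{E'}` the image of `w_E` under a
translation or a reflection in `W̃_δ` moving `π(w_E)` by `-t δ̌`; `m`-regularity forces
`t ≥ N + 2`, while for the fixed tuple `ū` the shift is at most `N - 2` once `N` is large. Hence
`N δ̌ · w_{E'} ≤_C w_E` and `u_E ≤_C N δ̌ · u_{E'}`, and composing along the gallery gives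
`η ∈ Λ` with `μ u_C ≤_C η μ u_D ≤_C η w_D ≤_C w_C`.
-/

open Module

section

variable {V : Type*} [AddCommGroup V]

lemma transl_zero : transl (0 : V) = 1 := by
  ext x
  simp [transl]

lemma transl_add (μ ν : V) : transl (μ + ν) = transl μ * transl ν := by
  ext x
  simp [transl]

lemma transl_mul_comm (μ ν : V) : transl μ * transl ν = transl ν * transl μ := by
  rw [← transl_add, add_comm, transl_add]

end

namespace RootSystemData

variable {V : Type*} [AddCommGroup V] [Module ℝ V] (RS : RootSystemData V)

lemma neg_mem {α : Dual ℝ V} (hα : α ∈ RS.roots) : -α ∈ RS.roots := by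
  have := RS.reflect_mem α hα α hα
  rwa [RS.root_coroot_two α hα, two_smul, sub_add_cancel_left] at this

lemma coroot_ne_zero {α : Dual ℝ V} (hα : α ∈ RS.roots) : RS.coroot α ≠ 0 := by
  intro h
  simpa [h] using RS.root_coroot_two α hα

lemma eq_zero_of_forall_root_apply_eq_zero {x : V} (h : ∀ α ∈ RS.roots, α x = 0) :
    x = 0 := by
  rw [← forall_dual_apply_eq_zero_iff ℝ x]
  intro φ
  have hφ : φ ∈ Submodule.span ℝ RS.roots := RS.span_top ▸ Submodule.mem_top
  induction hφ using Submodule.span_induction with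
  | mem f hf => exact h f hf
  | zero => rfl
  | add f g _ _ hf hg => simp [hf, hg]
  | smul c f _ hf => simp [hf]

def reflDual (δ : Dual ℝ V) : Module.End ℝ (Dual ℝ V) :=
  preReflection δ (Dual.eval ℝ V (RS.coroot δ))

lemma reflDual_apply (δ α : Dual ℝ V) : RS.reflDual δ α = α - α (RS.coroot δ) • δ := rfl

lemma reflDual_mem {δ α : Dual ℝ V} (hδ : δ ∈ RS.roots) (hα : α ∈ RS.roots) :
    RS.reflDual δ α ∈ RS.roots :=
  RS.reflect_mem δ hδ α hα

lemma reflDual_reflDual {δ : Dual ℝ V} (hδ : δ ∈ RS.roots) (α : Dual ℝ V) :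
    RS.reflDual δ (RS.reflDual δ α) = α :=
  involutive_preReflection (x := δ) (f := Dual.eval ℝ V (RS.coroot δ))
    (RS.root_coroot_two δ hδ) α

lemma reflDual_injective {δ : Dual ℝ V} (hδ : δ ∈ RS.roots) :
    Function.Injective (RS.reflDual δ) :=
  Function.LeftInverse.injective (RS.reflDual_reflDual hδ)

lemma reflDual_self {δ : Dual ℝ V} (hδ : δ ∈ RS.roots) : RS.reflDual δ δ = -δ :=
  preReflection_apply_self (RS.root_coroot_two δ hδ)

lemma sAff_apply {α : Dual ℝ V} (hα : α ∈ RS.roots) (n : ℤ) (x : V) :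
    RS.sAff α n x = x - (α x + n) • RS.coroot α := by
  rw [sAff, dif_pos (RS.root_coroot_two α hα)]
  rfl

lemma apply_sAff {δ : Dual ℝ V} (hδ : δ ∈ RS.roots) (n : ℤ) (α : Dual ℝ V) (x : V) :
    α (RS.sAff δ n x) = RS.reflDual δ α x - n * α (RS.coroot δ) := by
  simp only [RS.sAff_apply hδ, reflDual_apply, map_sub, map_smul, LinearMap.sub_apply,
    LinearMap.smul_apply, smul_eq_mul]
  ring

lemma apply_sAff_zero {δ : Dual ℝ V} (hδ : δ ∈ RS.roots) (α : Dual ℝ V) (x : V) :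
    α (RS.sAff δ 0 x) = RS.reflDual δ α x := by
  rw [RS.apply_sAff hδ, Int.cast_zero, zero_mul, sub_zero]

lemma sAff_mul_sAff {γ : Dual ℝ V} (hγ : γ ∈ RS.roots) (n₂ n₁ : ℤ) :
    RS.sAff γ n₂ * RS.sAff γ n₁ = transl (((n₁ : ℝ) - n₂) • RS.coroot γ) := by
  ext x
  simp only [Equiv.Perm.mul_apply, RS.sAff_apply hγ, transl, Equiv.coe_addLeft, map_sub,
    map_smul, smul_eq_mul, RS.root_coroot_two γ hγ]
  module

lemma sAff_mul_self {γ : Dual ℝ V} (hγ : γ ∈ RS.roots) (n : ℤ) :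
    RS.sAff γ n * RS.sAff γ n = 1 := by
  rw [RS.sAff_mul_sAff hγ, sub_self, zero_smul, transl_zero]

lemma transl_mul_sAff {γ : Dual ℝ V} (hγ : γ ∈ RS.roots) (a p : ℤ) :
    transl ((a : ℝ) • RS.coroot γ) * RS.sAff γ p = RS.sAff γ (p - a) := by
  ext x
  simp only [Equiv.Perm.mul_apply, RS.sAff_apply hγ, transl, Equiv.coe_addLeft]
  push_cast
  module

lemma transl_mul_sAff_eq_sAff_mul_transl {γ : Dual ℝ V} (hγ : γ ∈ RS.roots) {μ : V} {k : ℤ}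
    (hk : γ μ = k) (n : ℤ) :
    transl μ * RS.sAff γ n = RS.sAff γ (n - k) * transl μ := by
  ext x
  simp only [Equiv.Perm.mul_apply, RS.sAff_apply hγ, transl, Equiv.coe_addLeft, map_add, hk]
  push_cast
  module

lemma sAff_mul_transl {γ : Dual ℝ V} (hγ : γ ∈ RS.roots) (n t : ℤ) :
    RS.sAff γ n * transl ((t : ℝ) • RS.coroot γ) = RS.sAff γ (n + t) := by
  ext x
  simp only [Equiv.Perm.mul_apply, RS.sAff_apply hγ, transl, Equiv.coe_addLeft, map_add,
    map_smul, smul_eq_mul, RS.root_coroot_two γ hγ]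
  push_cast
  module

def invForm : LinearMap.BilinForm ℝ V :=
  ∑ α ∈ RS.finite.toFinset, α.smulRight α

lemma invForm_apply (x y : V) :
    RS.invForm x y = ∑ α ∈ RS.finite.toFinset, α x * α y := by
  simp [invForm, LinearMap.sum_apply]

lemma invForm_comm (x y : V) : RS.invForm x y = RS.invForm y x := by
  simp only [invForm_apply, mul_comm]

lemma invForm_self_pos {x : V} (hx : x ≠ 0) : 0 < RS.invForm x x := by
  rw [invForm_apply]
  refine lt_of_le_of_ne (Finset.sum_nonneg fun α _ => mul_self_nonneg _) fun h => hx ?_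
  refine RS.eq_zero_of_forall_root_apply_eq_zero fun α hα => ?_
  have := (Finset.sum_eq_zero_iff_of_nonneg fun β _ => mul_self_nonneg (β x)).1 h.symm α
    (RS.finite.mem_toFinset.2 hα)
  exact mul_self_eq_zero.1 this

lemma eq_of_forall_invForm_eq {x x' : V} (h : ∀ y, RS.invForm x y = RS.invForm x' y) :
    x = x' := by
  by_contra hne
  have h0 : ∀ y, RS.invForm (x - x') y = 0 := fun y => by
    rw [map_sub, LinearMap.sub_apply, h, sub_self]
  exact (RS.invForm_self_pos (sub_ne_zero.2 hne)).ne' (h0 _)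

lemma invForm_reflection {β : Dual ℝ V} (hβ : β ∈ RS.roots) (x y : V) :
    RS.invForm (x - β x • RS.coroot β) (y - β y • RS.coroot β) = RS.invForm x y := by
  have hmaps : ∀ α ∈ RS.finite.toFinset, RS.reflDual β α ∈ RS.finite.toFinset := fun α hα =>
    RS.finite.mem_toFinset.2 (RS.reflDual_mem hβ (RS.finite.mem_toFinset.1 hα))
  simp only [invForm_apply]
  refine Finset.sum_nbij' _ _ hmaps hmaps (fun α _ => RS.reflDual_reflDual hβ α)
    (fun α _ => RS.reflDual_reflDual hβ α) fun α _ => ?_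
  simp only [reflDual_apply, map_sub, map_smul, LinearMap.sub_apply, LinearMap.smul_apply,
    smul_eq_mul]
  ring

lemma two_mul_invForm_coroot {β : Dual ℝ V} (hβ : β ∈ RS.roots) (y : V) :
    2 * RS.invForm (RS.coroot β) y = RS.invForm (RS.coroot β) (RS.coroot β) * β y := by
  have h := RS.invForm_reflection hβ (RS.coroot β) y
  rw [RS.root_coroot_two β hβ] at h
  simp only [map_sub, map_smul, LinearMap.sub_apply, LinearMap.smul_apply, smul_eq_mul] at h
  linarith

lemma root_apply_eq {β : Dual ℝ V} (hβ : β ∈ RS.roots) (y : V) :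
    β y = 2 * RS.invForm (RS.coroot β) y / RS.invForm (RS.coroot β) (RS.coroot β) := by
  rw [RS.two_mul_invForm_coroot hβ, mul_div_cancel_left₀ _
    (RS.invForm_self_pos (RS.coroot_ne_zero hβ)).ne']

lemma coroot_eq_of_reflection_mem {β : Dual ℝ V} (hβ : β ∈ RS.roots) {c : V} (hc : β c = 2)
    (hrefl : ∀ α ∈ RS.roots, α - α c • β ∈ RS.roots) : RS.coroot β = c :=
  eval_apply_injective ℝ <| Dual.eq_of_preReflection_mapsTo RS.finite RS.span_top
    (RS.root_coroot_two β hβ) (fun α hα => RS.reflect_mem β hβ α hα) hc hrefl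

lemma coroot_neg {β : Dual ℝ V} (hβ : β ∈ RS.roots) : RS.coroot (-β) = -RS.coroot β := by
  refine RS.coroot_eq_of_reflection_mem (RS.neg_mem hβ) (by simp [RS.root_coroot_two β hβ])
    fun α hα => ?_
  convert RS.reflect_mem β hβ α hα using 1
  simp only [map_neg, smul_neg, neg_smul, neg_neg]

lemma coroot_reflDual {β δ : Dual ℝ V} (hβ : β ∈ RS.roots) (hδ : δ ∈ RS.roots) :
    RS.coroot (RS.reflDual δ β) = RS.coroot β - δ (RS.coroot β) • RS.coroot δ := by
  refine RS.coroot_eq_of_reflection_mem (RS.reflDual_mem hδ hβ) ?_ fun α hα => ?_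
  · simp only [reflDual_apply, LinearMap.sub_apply, LinearMap.smul_apply, map_sub, map_smul,
      smul_eq_mul, RS.root_coroot_two β hβ, RS.root_coroot_two δ hδ]
    ring
  · -- the reflection in `s_δ β` is `s_δ s_β s_δ`
    convert RS.reflDual_mem hδ (RS.reflDual_mem hβ (RS.reflDual_mem hδ hα)) using 1
    simp only [reflDual_apply, map_sub, map_smul, smul_eq_mul, RS.root_coroot_two δ hδ]
    module

lemma coroot_add {β γ : Dual ℝ V} (hβ : β ∈ RS.roots) (hγ : γ ∈ RS.roots)
    (hβγ : β + γ ∈ RS.roots) :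
    ∃ c₁ c₂ : ℝ, RS.coroot (β + γ) = c₁ • RS.coroot β + c₂ • RS.coroot γ := by
  set a₁ := RS.invForm (RS.coroot β) (RS.coroot β)
  set a₂ := RS.invForm (RS.coroot γ) (RS.coroot γ)
  set a₃ := RS.invForm (RS.coroot (β + γ)) (RS.coroot (β + γ))
  have ha₁ : a₁ ≠ 0 := (RS.invForm_self_pos (RS.coroot_ne_zero hβ)).ne'
  have ha₂ : a₂ ≠ 0 := (RS.invForm_self_pos (RS.coroot_ne_zero hγ)).ne'
  refine ⟨a₃ / a₁, a₃ / a₂, RS.eq_of_forall_invForm_eq fun y => ?_⟩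
  have e₁ : RS.invForm (RS.coroot β) y = a₁ * β y / 2 := by
    linarith [RS.two_mul_invForm_coroot hβ y]
  have e₂ : RS.invForm (RS.coroot γ) y = a₂ * γ y / 2 := by
    linarith [RS.two_mul_invForm_coroot hγ y]
  have e₃ : RS.invForm (RS.coroot (β + γ)) y = a₃ * (β + γ) y / 2 := by
    linarith [RS.two_mul_invForm_coroot hβγ y]
  simp only [map_add, map_smul, LinearMap.add_apply, LinearMap.smul_apply, smul_eq_mul, e₁, e₂,
    e₃]
  field_simp

lemma pairing_pos_symm {α δ : Dual ℝ V} (hα : α ∈ RS.roots) (hδ : δ ∈ RS.roots)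
    (h : 0 < α (RS.coroot δ)) : 0 < δ (RS.coroot α) := by
  rw [RS.root_apply_eq hα] at h
  rw [RS.root_apply_eq hδ, RS.invForm_comm]
  have := (div_pos_iff_of_pos_right (RS.invForm_self_pos (RS.coroot_ne_zero hα))).1 h
  have := RS.invForm_self_pos (RS.coroot_ne_zero hδ)
  positivity

lemma eq_or_eq_neg_of_coroot_eq_smul {α δ : Dual ℝ V} (hα : α ∈ RS.roots)
    (hδ : δ ∈ RS.roots) {a : ℝ} (h : RS.coroot δ = a • RS.coroot α) : δ = α ∨ δ = -α := by
  have ha : a ≠ 0 := by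
    rintro rfl
    exact RS.coroot_ne_zero hδ (by simpa using h)
  have hA := (RS.invForm_self_pos (RS.coroot_ne_zero hα)).ne'
  have hδα : δ = a⁻¹ • α := by
    ext y
    rw [LinearMap.smul_apply, RS.root_apply_eq hδ, RS.root_apply_eq hα, h]
    simp only [map_smul, LinearMap.smul_apply, smul_eq_mul]
    field_simp
  rcases RS.reduced α hα a⁻¹ (hδα ▸ hδ) with h1 | h1
  · exact .inl (by rw [hδα, h1, one_smul])
  · exact .inr (by ext y; simp [hδα, h1])

lemma pairing_mul_pairing_lt_four {α δ : Dual ℝ V} (hα : α ∈ RS.roots) (hδ : δ ∈ RS.roots)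
    (hne : α ≠ δ) (hne' : α ≠ -δ) : α (RS.coroot δ) * δ (RS.coroot α) < 4 := by
  have hA := RS.invForm_self_pos (RS.coroot_ne_zero hα)
  have hD := RS.invForm_self_pos (RS.coroot_ne_zero hδ)
  have hind : LinearIndependent ℝ ![RS.coroot α, RS.coroot δ] := by
    refine (LinearIndependent.pair_iff' (RS.coroot_ne_zero hα)).2 fun a h => ?_
    rcases RS.eq_or_eq_neg_of_coroot_eq_smul hα hδ h.symm with h | h
    · exact hne h.symm
    · exact hne' (by rw [h, neg_neg])
  have hCS := (RS.invForm.apply_mul_apply_lt_iff_linearIndependent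
    (fun x hx => RS.invForm_self_pos hx) _ _).2 hind
  rw [RS.root_apply_eq hα, RS.root_apply_eq hδ, RS.invForm_comm (RS.coroot δ),
    div_mul_div_comm, div_lt_iff₀ (by positivity)]
  rw [RS.invForm_comm (RS.coroot δ)] at hCS
  nlinarith

lemma pairing_eq_one_or_eq_one {α δ : Dual ℝ V} (hα : α ∈ RS.roots) (hδ : δ ∈ RS.roots)
    (hne : α ≠ δ) (h : 0 < α (RS.coroot δ)) :
    α (RS.coroot δ) = 1 ∨ δ (RS.coroot α) = 1 := by
  have hne' : α ≠ -δ := by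
    rintro rfl
    simp [RS.root_coroot_two δ hδ] at h
    linarith
  obtain ⟨k, hk⟩ := RS.crystallographic δ hδ α hα
  obtain ⟨l, hl⟩ := RS.crystallographic α hα δ hδ
  have hl0 := RS.pairing_pos_symm hα hδ h
  have hkl := RS.pairing_mul_pairing_lt_four hα hδ hne hne'
  rw [hk] at h hkl ⊢
  rw [hl] at hl0 hkl ⊢
  norm_cast at h hl0 hkl ⊢
  by_contra! hc
  nlinarith [show 2 ≤ k by omega, show 2 ≤ l by omega]

def IsSubsystem (Φ₀ : Set (Dual ℝ V)) : Prop :=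
  Φ₀ ⊆ RS.roots ∧ ∀ α ∈ Φ₀, ∀ δ ∈ Φ₀, RS.reflDual δ α ∈ Φ₀

lemma isSubsystem_roots : RS.IsSubsystem RS.roots :=
  ⟨subset_rfl, fun _ hα _ hδ => RS.reflDual_mem hδ hα⟩

lemma isSubsystem_phiZero (ψv : V) : RS.IsSubsystem (RS.phiZero ψv) := by
  refine ⟨fun α hα => hα.1, fun α ⟨hα, hα0⟩ δ ⟨hδ, hδ0⟩ => ⟨RS.reflDual_mem hδ hα, ?_⟩⟩
  simp [reflDual_apply, hα0, hδ0]

section IsSubsystem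

variable {RS} {Φ₀ : Set (Dual ℝ V)}

lemma IsSubsystem.neg_mem (h : RS.IsSubsystem Φ₀) {α : Dual ℝ V} (hα : α ∈ Φ₀) : -α ∈ Φ₀ := by
  simpa [RS.reflDual_self (h.1 hα)] using h.2 α hα α hα

lemma IsSubsystem.sub_mem (h : RS.IsSubsystem Φ₀) {α δ : Dual ℝ V} (hα : α ∈ Φ₀)
    (hδ : δ ∈ Φ₀) (hne : α ≠ δ) (hpos : 0 < α (RS.coroot δ)) : α - δ ∈ Φ₀ := by
  rcases RS.pairing_eq_one_or_eq_one (h.1 hα) (h.1 hδ) hne hpos with h1 | h1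
  · simpa [reflDual_apply, h1] using h.2 α hα δ hδ
  · simpa [reflDual_apply, h1] using h.neg_mem (h.2 δ hδ α hα)

end IsSubsystem

def posAt (Φ₀ : Set (Dual ℝ V)) (v : V) : Set (Dual ℝ V) := {α | α ∈ Φ₀ ∧ 0 < α v}

lemma posAt_induction {Φ₀ : Set (Dual ℝ V)} (hΦ₀ : Φ₀.Finite) (v : V) {Q : Dual ℝ V → Prop}
    (h : ∀ α ∈ posAt Φ₀ v, (∀ β ∈ posAt Φ₀ v, β v < α v → Q β) → Q α) {α : Dual ℝ V}
    (hα : α ∈ posAt Φ₀ v) : Q α := by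
  have : IsStrictOrder (Dual ℝ V) (fun β γ => β v < γ v) :=
    { irrefl := fun _ => lt_irrefl _, trans := fun _ _ _ => lt_trans }
  exact (hΦ₀.subset fun β hβ => hβ.1).wellFoundedOn.induction hα h

lemma posAt_induction_simplesOf {Φ₀ : Set (Dual ℝ V)} (hΦ₀ : Φ₀.Finite) (v : V)
    {Q : Dual ℝ V → Prop} (simple : ∀ α ∈ simplesOf (posAt Φ₀ v), Q α)
    (add : ∀ β ∈ posAt Φ₀ v, ∀ γ ∈ posAt Φ₀ v, β + γ ∈ posAt Φ₀ v → Q β → Q γ → Q (β + γ))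
    {α : Dual ℝ V} (hα : α ∈ posAt Φ₀ v) : Q α := by
  refine posAt_induction hΦ₀ v (fun α hα ih => ?_) hα
  by_cases hs : α ∈ simplesOf (posAt Φ₀ v)
  · exact simple α hs
  obtain ⟨β, hβ, γ, hγ, rfl⟩ : ∃ β ∈ posAt Φ₀ v, ∃ γ ∈ posAt Φ₀ v, α = β + γ := by
    by_contra hc
    exact hs ⟨hα, hc⟩
  have hβv := hβ.2
  have hγv := hγ.2
  refine add β hβ γ hγ hα (ih β hβ ?_) (ih γ hγ ?_) <;>
    simp only [LinearMap.add_apply] <;> linarith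

section SimpleReflection

variable {RS} {Φ₀ : Set (Dual ℝ V)} {v : V}

lemma IsSubsystem.sub_mem_posAt (hΦ₀ : RS.IsSubsystem Φ₀) (hv : RS.IsRegularPt v)
    {δ α : Dual ℝ V} (hδ : δ ∈ simplesOf (posAt Φ₀ v)) (hα : α ∈ posAt Φ₀ v) (hne : α ≠ δ)
    (hpos : 0 < α (RS.coroot δ)) : α - δ ∈ posAt Φ₀ v := by
  have hmem := hΦ₀.sub_mem hα.1 hδ.1.1 hne hpos
  refine ⟨hmem, (hv _ (hΦ₀.1 hmem)).lt_or_gt.resolve_left fun hneg => hδ.2 ?_⟩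
  refine ⟨α, hα, δ - α, ⟨by simpa using hΦ₀.neg_mem hmem, ?_⟩, by abel⟩
  simp only [LinearMap.sub_apply] at hneg ⊢
  linarith

lemma IsSubsystem.reflDual_mem_posAt (hΦ₀ : RS.IsSubsystem Φ₀) (hv : RS.IsRegularPt v)
    {δ α : Dual ℝ V} (hδ : δ ∈ simplesOf (posAt Φ₀ v)) (hα : α ∈ posAt Φ₀ v) (hne : α ≠ δ) :
    RS.reflDual δ α ∈ posAt Φ₀ v := by
  have hδr := hΦ₀.1 hδ.1.1
  have hδv := hδ.1.2
  have hval : ∀ β : Dual ℝ V, RS.reflDual δ β v = β v - β (RS.coroot δ) * δ v := fun β => by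
    simp [reflDual_apply]
  revert hne
  refine posAt_induction (RS.finite.subset hΦ₀.1) v
    (Q := fun α => α ≠ δ → RS.reflDual δ α ∈ posAt Φ₀ v) (fun α hα ih hne => ?_) hα
  have hmem : RS.reflDual δ α ∈ Φ₀ := hΦ₀.2 α hα.1 δ hδ.1.1
  refine ⟨hmem, (hv _ (hΦ₀.1 hmem)).lt_or_gt.resolve_left fun hneg => ?_⟩
  -- a counterexample `α` yields the smaller counterexample `α - δ`
  have hk : 0 < α (RS.coroot δ) := by nlinarith [hα.2, hval α]
  have hγ : -RS.reflDual δ α ∈ posAt Φ₀ v :=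
    ⟨hΦ₀.neg_mem hmem, by rw [LinearMap.neg_apply]; linarith⟩
  have hγne : -RS.reflDual δ α ≠ δ := fun h => hne <| RS.reflDual_injective hδr <| by
    rw [RS.reflDual_self hδr]
    exact neg_eq_iff_eq_neg.mp h
  have hγδ := hΦ₀.sub_mem_posAt hv hδ hγ hγne (by
    simp only [reflDual_apply, LinearMap.neg_apply, LinearMap.sub_apply, LinearMap.smul_apply,
      smul_eq_mul, RS.root_coroot_two δ hδr]
    linarith)
  have hαδne : α - δ ≠ δ := fun h => by
    have h2δ : (2 : ℝ) • δ ∈ RS.roots := by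
      rw [two_smul, ← sub_eq_iff_eq_add.mp h]
      exact hΦ₀.1 hα.1
    rcases RS.reduced δ hδr 2 h2δ with h | h <;> norm_num at h
  have hαδ := ih _ (hΦ₀.sub_mem_posAt hv hδ hα hne hk)
    (by simp only [LinearMap.sub_apply]; linarith) hαδne
  rw [show RS.reflDual δ (α - δ) = -(-RS.reflDual δ α - δ) by
    rw [map_sub, RS.reflDual_self hδr]; abel] at hαδ
  linarith [hαδ.2, hγδ.2, LinearMap.neg_apply (-RS.reflDual δ α - δ) v]

lemma IsSubsystem.posAt_sAff (hΦ₀ : RS.IsSubsystem Φ₀) (hv : RS.IsRegularPt v)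
    {δ : Dual ℝ V} (hδ : δ ∈ simplesOf (posAt Φ₀ v)) :
    posAt Φ₀ (RS.sAff δ 0 v) = insert (-δ) (posAt Φ₀ v \ {δ}) := by
  have hδr := hΦ₀.1 hδ.1.1
  have hmem : ∀ α, α ∈ posAt Φ₀ (RS.sAff δ 0 v) ↔ α ∈ Φ₀ ∧ 0 < RS.reflDual δ α v := by
    simp [posAt, RS.apply_sAff_zero hδr]
  ext α
  rw [hmem, Set.mem_insert_iff, Set.mem_sdiff, Set.mem_singleton_iff]
  constructor
  · rintro ⟨hα, hαv⟩
    by_cases hαδ : α = -δ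
    · exact .inl hαδ
    refine .inr ⟨⟨hα, (hv α (hΦ₀.1 hα)).lt_or_gt.resolve_left fun hneg => ?_⟩, ?_⟩
    · have hne : -α ≠ δ := fun h => hαδ (by rw [← h, neg_neg])
      have := (hΦ₀.reflDual_mem_posAt hv hδ ⟨hΦ₀.neg_mem hα, by simpa using hneg⟩ hne).2
      simp only [map_neg, LinearMap.neg_apply] at this
      linarith
    · rintro rfl
      have := hδ.1.2
      rw [RS.reflDual_self hδr, LinearMap.neg_apply] at hαv
      linarith
  · rintro (rfl | ⟨hα, hne⟩)
    · refine ⟨hΦ₀.neg_mem hδ.1.1, ?_⟩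
      rw [map_neg, RS.reflDual_self hδr, neg_neg]
      exact hδ.1.2
    · exact ⟨hα.1, (hΦ₀.reflDual_mem_posAt hv hδ hα hne).2⟩

end SimpleReflection

lemma image_simplesOf {g : Dual ℝ V →ₗ[ℝ] Dual ℝ V} (hg : Function.Injective g)
    (P : Set (Dual ℝ V)) : g '' simplesOf P = simplesOf (g '' P) := by
  ext α'
  constructor
  · rintro ⟨α, ⟨hαP, hα⟩, rfl⟩
    refine ⟨⟨α, hαP, rfl⟩, ?_⟩
    rintro ⟨_, ⟨β, hβ, rfl⟩, _, ⟨γ, hγ, rfl⟩, h⟩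
    exact hα ⟨β, hβ, γ, hγ, hg (by rw [h, map_add])⟩
  · rintro ⟨⟨α, hαP, rfl⟩, hα⟩
    refine ⟨α, ⟨hαP, ?_⟩, rfl⟩
    rintro ⟨β, hβ, γ, hγ, rfl⟩
    exact hα ⟨g β, ⟨β, hβ, rfl⟩, g γ, ⟨γ, hγ, rfl⟩, map_add g β γ⟩

lemma regular_sAff {δ : Dual ℝ V} (hδ : δ ∈ RS.roots) {v : V} (hv : RS.IsRegularPt v) :
    RS.IsRegularPt (RS.sAff δ 0 v) := by
  intro α hα
  rw [RS.apply_sAff_zero hδ]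
  exact hv _ (RS.reflDual_mem hδ hα)

lemma posAt_roots_sAff {δ : Dual ℝ V} (hδ : δ ∈ RS.roots) (v : V) :
    posAt RS.roots (RS.sAff δ 0 v) = RS.reflDual δ '' posAt RS.roots v := by
  ext α
  constructor
  · rintro ⟨hα, hαv⟩
    refine ⟨RS.reflDual δ α, ⟨RS.reflDual_mem hδ hα, ?_⟩, RS.reflDual_reflDual hδ α⟩
    rwa [← RS.apply_sAff_zero hδ]
  · rintro ⟨β, ⟨hβ, hβv⟩, rfl⟩
    exact ⟨RS.reflDual_mem hδ hβ, by rwa [RS.apply_sAff_zero hδ, RS.reflDual_reflDual hδ]⟩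

def chamberOf (v : V) : Set V := {x | ∀ α ∈ RS.roots, 0 < α v → 0 < α x}

lemma isChamber_chamberOf {v : V} (hv : RS.IsRegularPt v) : RS.IsChamber (RS.chamberOf v) :=
  ⟨v, hv, rfl⟩

lemma chamberOf_eq (v : V) : RS.chamberOf v = {x | ∀ α ∈ posAt RS.roots v, 0 < α x} := by
  ext x
  exact ⟨fun h α hα => h α hα.1 hα.2, fun h α hα hαv => h α ⟨hα, hαv⟩⟩

lemma chamberOf_congr {v w : V} (h : posAt RS.roots v = posAt RS.roots w) :
    RS.chamberOf v = RS.chamberOf w := by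
  rw [chamberOf_eq, chamberOf_eq, h]

lemma pos_chamberOf (v : V) : RS.pos (RS.chamberOf v) = posAt RS.roots v := by
  ext α
  exact ⟨fun ⟨hα, h⟩ => ⟨hα, h v fun _ _ h => h⟩, fun ⟨hα, h⟩ => ⟨hα, fun _ hx => hx α hα h⟩⟩

lemma simples_chamberOf (v : V) : RS.simples (RS.chamberOf v) = simplesOf (posAt RS.roots v) := by
  rw [simples, pos_chamberOf]

lemma image_sAff_chamberOf {δ : Dual ℝ V} (hδ : δ ∈ RS.roots) (v : V) :
    ⇑(RS.sAff δ 0) '' RS.chamberOf v = RS.chamberOf (RS.sAff δ 0 v) := by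
  have h := RS.apply_sAff_zero hδ
  have hinv : ∀ x, RS.sAff δ 0 (RS.sAff δ 0 x) = x := fun x => by
    rw [← Equiv.Perm.mul_apply, RS.sAff_mul_self hδ, Equiv.Perm.one_apply]
  ext y
  constructor
  · rintro ⟨x, hx, rfl⟩ α hα hαv
    rw [h] at hαv ⊢
    exact hx _ (RS.reflDual_mem hδ hα) hαv
  · refine fun hy => ⟨RS.sAff δ 0 y, fun α hα hαv => ?_, hinv y⟩
    rw [h]
    refine hy _ (RS.reflDual_mem hδ hα) ?_
    rwa [h, RS.reflDual_reflDual hδ]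

instance : Finite RS.ChamberT := by
  refine Set.Finite.to_subtype (Set.Finite.subset (RS.finite.finite_subsets.image
    fun P => {x : V | ∀ α ∈ P, 0 < α x}) ?_)
  rintro C ⟨v, -, rfl⟩
  exact ⟨posAt RS.roots v, fun α hα => hα.1, (RS.chamberOf_eq v).symm⟩

section Gallery

variable {RS} {Φ₀ : Set (Dual ℝ V)}

lemma IsSubsystem.posAt_eq_of_subset (hΦ₀ : RS.IsSubsystem Φ₀) {v w : V}
    (hv : RS.IsRegularPt v) (h : posAt Φ₀ v ⊆ posAt Φ₀ w) : posAt Φ₀ v = posAt Φ₀ w := by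
  refine h.antisymm fun α hα => ⟨hα.1, (hv α (hΦ₀.1 hα.1)).lt_or_gt.resolve_left fun hneg => ?_⟩
  have := (h ⟨hΦ₀.neg_mem hα.1, by simpa using hneg⟩).2
  have := hα.2
  simp only [LinearMap.neg_apply] at *
  linarith

lemma IsSubsystem.exists_simplesOf_not_mem (hΦ₀ : RS.IsSubsystem Φ₀) {v w : V}
    (hv : RS.IsRegularPt v) (h : posAt Φ₀ v ≠ posAt Φ₀ w) :
    ∃ δ ∈ simplesOf (posAt Φ₀ v), δ ∉ posAt Φ₀ w := by
  by_contra! hc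
  refine h (hΦ₀.posAt_eq_of_subset hv fun α hα => ?_)
  refine posAt_induction_simplesOf (RS.finite.subset hΦ₀.1) v (Q := (· ∈ posAt Φ₀ w)) hc
    (fun β hβ γ hγ hβγ hβw hγw => ⟨hβγ.1, ?_⟩) hα
  simpa using add_pos hβw.2 hγw.2

lemma IsSubsystem.posAt_sAff_sdiff (hΦ₀ : RS.IsSubsystem Φ₀) {v w : V}
    (hv : RS.IsRegularPt v) (hw : RS.IsRegularPt w) {δ : Dual ℝ V}
    (hδ : δ ∈ simplesOf (posAt Φ₀ v)) (hδw : δ ∉ posAt Φ₀ w) :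
    posAt Φ₀ (RS.sAff δ 0 v) \ posAt Φ₀ w = (posAt Φ₀ v \ posAt Φ₀ w) \ {δ} := by
  have hnδ : -δ ∈ posAt Φ₀ w := ⟨hΦ₀.neg_mem hδ.1.1, by
    simpa using (hw δ (hΦ₀.1 hδ.1.1)).lt_or_gt.resolve_right fun h => hδw ⟨hδ.1.1, h⟩⟩
  rw [hΦ₀.posAt_sAff hv hδ, Set.insert_sdiff_of_mem _ hnδ, Set.sdiff_sdiff_comm]

lemma IsSubsystem.gallery_induction (hΦ₀ : RS.IsSubsystem Φ₀) {w : V}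
    (hw : RS.IsRegularPt w) {Q : V → Prop}
    (base : ∀ v, RS.IsRegularPt v → posAt Φ₀ v = posAt Φ₀ w → Q v)
    (step : ∀ v, RS.IsRegularPt v → ∀ δ ∈ simplesOf (posAt Φ₀ v), δ ∉ posAt Φ₀ w →
      Q (RS.sAff δ 0 v) → Q v)
    {v : V} (hv : RS.IsRegularPt v) : Q v := by
  induction hn : (posAt Φ₀ v \ posAt Φ₀ w).ncard using Nat.strong_induction_on generalizing v
    with
  | _ n ih =>
    by_cases heq : posAt Φ₀ v = posAt Φ₀ w
    · exact base v hv heq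
    obtain ⟨δ, hδ, hδw⟩ := hΦ₀.exists_simplesOf_not_mem hv heq
    refine step v hv δ hδ hδw (ih _ ?_ (RS.regular_sAff (hΦ₀.1 hδ.1.1) hv) rfl)
    rw [← hn, hΦ₀.posAt_sAff_sdiff hv hw hδ hδw]
    exact Set.ncard_sdiff_singleton_lt_of_mem ⟨hδ.1, hδw⟩
      ((RS.finite.subset hΦ₀.1).subset fun α hα => hα.1.1)

end Gallery

lemma exists_root_apply_eq_intCast {μ : V} (hμ : μ ∈ RS.corootLattice) {β : Dual ℝ V}
    (hβ : β ∈ RS.roots) : ∃ k : ℤ, β μ = k := by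
  induction hμ using AddSubgroup.closure_induction with
  | mem x hx =>
    obtain ⟨α, hα, rfl⟩ := hx
    exact RS.crystallographic α hα β hβ
  | zero => exact ⟨0, by simp⟩
  | add x y _ _ hx hy =>
    obtain ⟨k, hk⟩ := hx
    obtain ⟨l, hl⟩ := hy
    exact ⟨k + l, by simp [hk, hl]⟩
  | neg x _ hx =>
    obtain ⟨k, hk⟩ := hx
    exact ⟨-k, by simp [hk]⟩

lemma smul_coroot_mem_corootLattice {γ : Dual ℝ V} (hγ : γ ∈ RS.roots) (N : ℤ) :
    (N : ℝ) • RS.coroot γ ∈ RS.corootLattice := by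
  rw [Int.cast_smul_eq_zsmul]
  exact zsmul_mem (AddSubgroup.subset_closure (Set.mem_image_of_mem _ hγ)) N

def MapsAffineRoots (z : Equiv.Perm V) : Prop :=
  ∀ α ∈ RS.roots, ∃ β ∈ RS.roots, ∃ k : ℤ, ∀ x, α (z x) = β x + k

section MapsAffineRoots

variable {RS}

lemma MapsAffineRoots.exists_apply_zero {z : Equiv.Perm V} (hz : RS.MapsAffineRoots z)
    {α : Dual ℝ V} (hα : α ∈ RS.roots) : ∃ k : ℤ, α (z 0) = k := by
  obtain ⟨β, -, k, h⟩ := hz α hα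
  exact ⟨k, by simp [h]⟩

lemma MapsAffineRoots.mul {z₁ z₂ : Equiv.Perm V} (h₁ : RS.MapsAffineRoots z₁)
    (h₂ : RS.MapsAffineRoots z₂) : RS.MapsAffineRoots (z₁ * z₂) := by
  intro α hα
  obtain ⟨β₁, hβ₁, k₁, hk₁⟩ := h₁ α hα
  obtain ⟨β₂, hβ₂, k₂, hk₂⟩ := h₂ β₁ hβ₁
  exact ⟨β₂, hβ₂, k₂ + k₁, fun x => by simp [hk₁, hk₂, add_assoc]⟩

end MapsAffineRoots

lemma mapsAffineRoots_one : RS.MapsAffineRoots 1 := by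
  intro α hα
  exact ⟨α, hα, 0, fun x => by simp⟩

lemma mapsAffineRoots_sAff {δ : Dual ℝ V} (hδ : δ ∈ RS.roots) (n : ℤ) :
    RS.MapsAffineRoots (RS.sAff δ n) := by
  intro α hα
  obtain ⟨k, hk⟩ := RS.crystallographic δ hδ α hα
  exact ⟨RS.reflDual δ α, RS.reflDual_mem hδ hα, -n * k, fun x => by
    rw [RS.apply_sAff hδ, hk]; push_cast; ring⟩

lemma mapsAffineRoots_transl {μ : V} (hμ : μ ∈ RS.corootLattice) :
    RS.MapsAffineRoots (transl μ) := by
  intro α hα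
  obtain ⟨k, hk⟩ := RS.exists_root_apply_eq_intCast hμ hα
  exact ⟨α, hα, k, fun x => by simp [transl, hk, add_comm]⟩

lemma mapsAffineRoots_of_mem_affWeyl {z : Equiv.Perm V} (hz : z ∈ RS.affWeyl) :
    RS.MapsAffineRoots z := by
  induction hz using Subgroup.closure_induction'' with
  | mem _ hx =>
    obtain ⟨α, hα, n, rfl⟩ := hx
    exact RS.mapsAffineRoots_sAff hα.1 n
  | inv_mem _ hx =>
    obtain ⟨α, hα, n, rfl⟩ := hx
    rw [inv_eq_of_mul_eq_one_left (RS.sAff_mul_self hα.1 n)]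
    exact RS.mapsAffineRoots_sAff hα.1 n
  | one => exact RS.mapsAffineRoots_one
  | mul _ _ _ _ hx hy => exact hx.mul hy

section Order

variable {P Φ' : Set (Dual ℝ V)}

lemma ordLE_iff_reflTransGen {x y : Equiv.Perm V} :
    RS.ordLE P Φ' x y ↔ Relation.ReflTransGen (RS.stepRel P Φ') x y := by
  rw [Relation.reflTransGen_iff_eq_or_transGen, eq_comm]
  rfl

lemma ordLE_trans {x y z : Equiv.Perm V} (hxy : RS.ordLE P Φ' x y)
    (hyz : RS.ordLE P Φ' y z) : RS.ordLE P Φ' x z := by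
  rw [ordLE_iff_reflTransGen] at *
  exact hxy.trans hyz

lemma ordLE_mono {Φ'' : Set (Dual ℝ V)} (hΦ : Φ' ⊆ Φ'') {x y : Equiv.Perm V}
    (h : RS.ordLE P Φ' x y) : RS.ordLE P Φ'' x y := by
  rw [ordLE_iff_reflTransGen] at *
  refine Relation.ReflTransGen.mono (fun a b hab => ?_) _ _ h
  obtain ⟨γ, hγ, n, hab, hpos⟩ := hab
  exact ⟨γ, ⟨hγ.1, hΦ hγ.2⟩, n, hab, hpos⟩

lemma ordLE_transl_mul {μ : V} (hμ : μ ∈ RS.corootLattice) {x y : Equiv.Perm V}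
    (h : RS.ordLE P Φ' x y) : RS.ordLE P Φ' (transl μ * x) (transl μ * y) := by
  rw [ordLE_iff_reflTransGen] at *
  refine Relation.ReflTransGen.lift _ (fun a b hab => ?_) _ _ h
  obtain ⟨γ, hγ, n, rfl, hpos⟩ := hab
  obtain ⟨k, hk⟩ := RS.exists_root_apply_eq_intCast hμ hγ.1
  refine ⟨γ, hγ, n - k, by rw [← mul_assoc, RS.transl_mul_sAff_eq_sAff_mul_transl hγ.1 hk,
    mul_assoc], ?_⟩
  convert hpos using 2 with v
  simp only [aev, Equiv.Perm.mul_apply, transl, Equiv.coe_addLeft, map_add, hk]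
  push_cast
  ring

lemma ordLE_sAff_mul {z : Equiv.Perm V} (hz : RS.MapsAffineRoots z) {γ : Dual ℝ V}
    (hγ : γ ∈ RS.roots) (hγ' : γ ∈ Φ') {p : ℤ} (hp : 1 ≤ γ (z 0) + p) :
    RS.ordLE P Φ' (RS.sAff γ p * z) z := by
  obtain ⟨β, hβ, k, hk⟩ := hz γ hγ
  have h0 : γ (z 0) = k := by simp [hk]
  rw [h0] at hp
  refine .inr (.single ⟨γ, ⟨hγ, hγ'⟩, p, rfl, β, hβ, k + p, ?_, .inl (by exact_mod_cast hp)⟩)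
  funext v
  simp only [aev, hk]
  push_cast
  ring

lemma ordLE_transl_neg_smul_coroot_mul {z : Equiv.Perm V} (hz : RS.MapsAffineRoots z)
    {γ : Dual ℝ V} (hγ : γ ∈ RS.roots) (hγ' : γ ∈ Φ') {k : ℤ} (hk : 2 ≤ k) :
    RS.ordLE P Φ' (transl (-(k : ℝ) • RS.coroot γ) * z) z := by
  -- the translation is the product of the reflections in two parallel walls `k` apart
  obtain ⟨k₀, hk₀⟩ := hz.exists_apply_zero hγ
  have h₁ : RS.ordLE P Φ' (RS.sAff γ (1 - k₀) * z) z :=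
    RS.ordLE_sAff_mul hz hγ hγ' (by rw [hk₀]; push_cast; linarith)
  have h₂ : RS.ordLE P Φ' (RS.sAff γ (k + 1 - k₀) * (RS.sAff γ (1 - k₀) * z))
      (RS.sAff γ (1 - k₀) * z) := by
    refine RS.ordLE_sAff_mul ((RS.mapsAffineRoots_sAff hγ _).mul hz) hγ hγ' ?_
    rw [Equiv.Perm.mul_apply, RS.apply_sAff hγ, reflDual_apply, LinearMap.sub_apply,
      LinearMap.smul_apply, smul_eq_mul, RS.root_coroot_two γ hγ, hk₀]
    have : (2 : ℝ) ≤ k := by exact_mod_cast hk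
    push_cast
    linarith
  convert RS.ordLE_trans h₂ h₁ using 1
  rw [← mul_assoc, RS.sAff_mul_sAff hγ]
  congr 3
  push_cast
  ring

end Order

/-- `x` is obtained from `z` by an element of `W̃_γ` moving `z 0` to `z 0 - t γ̌`. -/
def IsLineShift (γ : Dual ℝ V) (t : ℤ) (x z : Equiv.Perm V) : Prop :=
  x = transl (-(t : ℝ) • RS.coroot γ) * z ∨ ∃ p : ℤ, x = RS.sAff γ p * z ∧ γ (z 0) + p = t

section IsLineShift

variable {RS} {γ : Dual ℝ V} {t : ℤ} {x z : Equiv.Perm V}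

lemma IsLineShift.apply_zero (hγ : γ ∈ RS.roots) (h : RS.IsLineShift γ t x z) :
    x 0 = z 0 - (t : ℝ) • RS.coroot γ := by
  rcases h with rfl | ⟨p, rfl, hp⟩
  · simp only [Equiv.Perm.mul_apply, transl, Equiv.coe_addLeft, neg_smul]
    abel
  · rw [Equiv.Perm.mul_apply, RS.sAff_apply hγ, hp]

lemma IsLineShift.root_apply_zero (hγ : γ ∈ RS.roots) (h : RS.IsLineShift γ t x z) :
    γ (x 0) = γ (z 0) - 2 * t := by
  rw [h.apply_zero hγ, map_sub, map_smul, RS.root_coroot_two γ hγ, smul_eq_mul, mul_comm]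

end IsLineShift

section LineShiftOrder

variable {P Φ' : Set (Dual ℝ V)} {γ : Dual ℝ V} {x z : Equiv.Perm V}

lemma exists_isLineShift_of_ordLE (hγ : γ ∈ RS.roots) (h : RS.ordLE P {γ} x z) :
    ∃ t : ℤ, 0 ≤ t ∧ RS.IsLineShift γ t x z := by
  rw [ordLE_iff_reflTransGen] at h
  induction h using Relation.ReflTransGen.head_induction_on with
  | refl => exact ⟨0, le_rfl, .inl (by simp [transl_zero])⟩
  | @head a a' hstep _ ih =>
    obtain ⟨t, ht, hshift⟩ := ih
    obtain ⟨γ', ⟨-, hγ'⟩, n, rfl, β, -, c, hc, hcpos⟩ := hstep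
    obtain rfl : γ = γ' := hγ'.symm
    have hc0 : γ (a' 0) + n = c := by simpa [aev] using congrFun hc 0
    have hc0' : 0 ≤ c := by rcases hcpos with h | ⟨h, -⟩ <;> omega
    have ha' := hshift.root_apply_zero hγ
    refine ⟨c + t, by omega, ?_⟩
    rcases hshift with rfl | ⟨p, rfl, hp⟩
    · refine .inr ⟨n + -t, ?_, by push_cast; linarith⟩
      rw [← mul_assoc, show -(t : ℝ) • RS.coroot γ = ((-t : ℤ) : ℝ) • RS.coroot γ by
        push_cast; rfl, RS.sAff_mul_transl hγ]
    · refine .inl ?_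
      rw [← mul_assoc, RS.sAff_mul_sAff hγ]
      congr 3
      push_cast
      linarith

lemma transl_mul_ordLE_of_ordLE_singleton (hγ : γ ∈ RS.roots) (hγ' : γ ∈ Φ')
    (hz : RS.MapsAffineRoots z) (h : RS.ordLE P {γ} x z) {N : ℤ}
    (hz0 : (N : ℝ) + 2 ≤ γ (z 0)) (hx0 : (N : ℝ) + 2 ≤ -γ (x 0)) :
    RS.ordLE P Φ' (transl ((N : ℝ) • RS.coroot γ) * x) z := by
  obtain ⟨t, -, hshift⟩ := RS.exists_isLineShift_of_ordLE hγ h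
  have ht : (N : ℝ) + 2 ≤ t := by linarith [hshift.root_apply_zero hγ]
  rcases hshift with rfl | ⟨p, rfl, hp⟩
  · have hk : 2 ≤ t - N := by
      have : N + 2 ≤ t := by exact_mod_cast ht
      omega
    convert RS.ordLE_transl_neg_smul_coroot_mul hz hγ hγ' hk using 1
    rw [← mul_assoc, ← transl_add]
    congr 2
    push_cast
    module
  · rw [← mul_assoc, RS.transl_mul_sAff hγ]
    exact RS.ordLE_sAff_mul hz hγ hγ' (by push_cast; linarith)

lemma ordLE_transl_mul_of_ordLE_singleton (hγ : γ ∈ RS.roots) (hγ' : γ ∈ Φ')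
    (hz : RS.MapsAffineRoots z) (h : RS.ordLE P {γ} x z) {N : ℤ}
    (hdrop : γ (z 0) - γ (x 0) ≤ 2 * ((N : ℝ) - 2)) :
    RS.ordLE P Φ' z (transl ((N : ℝ) • RS.coroot γ) * x) := by
  obtain ⟨t, -, hshift⟩ := RS.exists_isLineShift_of_ordLE hγ h
  have ht : (t : ℝ) + 2 ≤ N := by linarith [hshift.root_apply_zero hγ]
  rcases hshift with rfl | ⟨p, rfl, hp⟩
  · have hk : 2 ≤ N - t := by
      have : t + 2 ≤ N := by exact_mod_cast ht
      omega
    have hZ : transl ((N : ℝ) • RS.coroot γ) * (transl (-(t : ℝ) • RS.coroot γ) * z) =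
        transl (((N - t : ℤ) : ℝ) • RS.coroot γ) * z := by
      rw [← mul_assoc, ← transl_add]
      congr 2
      push_cast
      module
    rw [hZ]
    have hZmaps :=
      (RS.mapsAffineRoots_transl (RS.smul_coroot_mem_corootLattice hγ (N - t))).mul hz
    convert RS.ordLE_transl_neg_smul_coroot_mul hZmaps hγ hγ' hk using 1
    rw [← mul_assoc, ← transl_add, neg_smul, neg_add_cancel, transl_zero, one_mul]
  · rw [← mul_assoc, RS.transl_mul_sAff hγ]
    convert RS.ordLE_sAff_mul ((RS.mapsAffineRoots_sAff hγ (p - N)).mul hz) hγ hγ'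
      (p := p - N) ?_ using 1
    · rw [← mul_assoc, RS.sAff_mul_self hγ, one_mul]
    · rw [Equiv.Perm.mul_apply, RS.apply_sAff hγ, RS.reflDual_self hγ, LinearMap.neg_apply,
        RS.root_coroot_two γ hγ]
      push_cast
      linarith

end LineShiftOrder

section FundamentalWeight

variable {ψ : Dual ℝ V} {ψv : V}

lemma fundWeight_coroot_eq_zero {v : V} (hv : RS.IsRegularPt v)
    (hψ : RS.IsFundPair (RS.chamberOf v) ψ ψv) {γ : Dual ℝ V} (hγ : γ ∈ RS.roots)
    (hγ0 : γ ψv = 0) : ψ (RS.coroot γ) = 0 := by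
  obtain ⟨α₀, ⟨-, hψα⟩, -, hψvα⟩ := hψ
  rw [simples_chamberOf] at hψα hψvα
  have key : ∀ β ∈ posAt RS.roots v, 0 ≤ β ψv ∧ (β ψv = 0 → ψ (RS.coroot β) = 0) := by
    refine fun β hβ => posAt_induction_simplesOf RS.finite v
      (Q := fun β => 0 ≤ β ψv ∧ (β ψv = 0 → ψ (RS.coroot β) = 0)) (fun τ hτ => ?_)
      (fun β₁ hβ₁ β₂ hβ₂ hβ₁₂ h₁ h₂ => ?_) hβ
    · rw [hψα τ hτ, hψvα τ hτ]
      split_ifs <;> simp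
    · simp only [LinearMap.add_apply] at h₁ h₂ ⊢
      refine ⟨add_nonneg h₁.1 h₂.1, fun h0 => ?_⟩
      obtain ⟨c₁, c₂, hc⟩ := RS.coroot_add hβ₁.1 hβ₂.1 hβ₁₂.1
      simp [hc, h₁.2 (by linarith [h₁.1, h₂.1]), h₂.2 (by linarith [h₁.1, h₂.1])]
  rcases (hv γ hγ).lt_or_gt with hneg | hpos
  · have := (key (-γ) ⟨RS.neg_mem hγ, by simpa using hneg⟩).2 (by simpa using hγ0)
    simpa [RS.coroot_neg hγ] using this
  · exact (key γ ⟨hγ, hpos⟩).2 hγ0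

lemma isFundPair_chamberOf_sAff {v : V} (hv : RS.IsRegularPt v)
    (hψ : RS.IsFundPair (RS.chamberOf v) ψ ψv) {δ : Dual ℝ V}
    (hδ : δ ∈ simplesOf (posAt (RS.phiZero ψv) v)) :
    RS.IsFundPair (RS.chamberOf (RS.sAff δ 0 v)) ψ ψv := by
  obtain ⟨⟨hδr, hδ0⟩, -⟩ := hδ.1
  have hψδ := RS.fundWeight_coroot_eq_zero hv hψ hδr hδ0
  obtain ⟨α₀, ⟨hα₀, hψα⟩, -, hψvα⟩ := hψ
  have hsimp : RS.simples (RS.chamberOf (RS.sAff δ 0 v)) =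
      RS.reflDual δ '' RS.simples (RS.chamberOf v) := by
    rw [simples_chamberOf, simples_chamberOf, RS.posAt_roots_sAff hδr,
      image_simplesOf (RS.reflDual_injective hδr)]
  have hite : ∀ β, (if RS.reflDual δ β = RS.reflDual δ α₀ then (1 : ℝ) else 0) =
      if β = α₀ then 1 else 0 := fun β => by
    simp only [(RS.reflDual_injective hδr).eq_iff]
  have hα₀' : RS.reflDual δ α₀ ∈ RS.simples (RS.chamberOf (RS.sAff δ 0 v)) :=
    hsimp ▸ ⟨α₀, hα₀, rfl⟩
  refine ⟨RS.reflDual δ α₀, ⟨hα₀', ?_⟩, hα₀', ?_⟩ <;> rw [hsimp] <;>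
    rintro _ ⟨β, hβ, rfl⟩ <;> rw [hite]
  · rw [RS.coroot_reflDual hβ.1.1 hδr, map_sub, map_smul, hψδ, smul_zero, sub_zero]
    exact hψα β hβ
  · rw [reflDual_apply, LinearMap.sub_apply, LinearMap.smul_apply, hδ0, smul_zero, sub_zero]
    exact hψvα β hβ

lemma exists_isFundPair_posAt_phiZero_eq {v₀ w : V} (hv₀ : RS.IsRegularPt v₀)
    (hψ : RS.IsFundPair (RS.chamberOf v₀) ψ ψv) (hw : RS.IsRegularPt w) :
    ∃ v, RS.IsRegularPt v ∧ RS.IsFundPair (RS.chamberOf v) ψ ψv ∧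
      posAt (RS.phiZero ψv) v = posAt (RS.phiZero ψv) w :=
  (RS.isSubsystem_phiZero ψv).gallery_induction hw
    (Q := fun v => RS.IsFundPair (RS.chamberOf v) ψ ψv → ∃ v', RS.IsRegularPt v' ∧
      RS.IsFundPair (RS.chamberOf v') ψ ψv ∧ posAt (RS.phiZero ψv) v' = posAt (RS.phiZero ψv) w)
    (fun v hv heq hψ => ⟨v, hv, hψ, heq⟩)
    (fun _ hv _ hδ _ ih hψ => ih (RS.isFundPair_chamberOf_sAff hv hψ hδ)) hv₀ hψ

end FundamentalWeight

lemma neg_mem_pos_image_sAff {δ : Dual ℝ V} {C : Set V} (hδ : δ ∈ RS.pos C) :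
    -δ ∈ RS.pos (⇑(RS.sAff δ 0) '' C) := by
  refine ⟨RS.neg_mem hδ.1, ?_⟩
  rintro _ ⟨x, hx, rfl⟩
  rw [LinearMap.neg_apply, RS.apply_sAff_zero hδ.1, RS.reflDual_self hδ.1, LinearMap.neg_apply,
    neg_neg]
  exact hδ.2 x hx

lemma pos_chamberOf_inter_subset_posAt {Φ₀ : Set (Dual ℝ V)} (hΦ₀ : Φ₀ ⊆ RS.roots) {v w : V}
    (h : posAt Φ₀ v = posAt Φ₀ w) : RS.pos (RS.chamberOf v) ∩ Φ₀ ⊆ posAt RS.roots w := by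
  rintro α ⟨hα, hαΦ₀⟩
  rw [pos_chamberOf] at hα
  have : α ∈ posAt Φ₀ w := h ▸ ⟨hαΦ₀, hα.2⟩
  exact ⟨hΦ₀ hαΦ₀, this.2⟩

lemma exists_forall_root_apply_sub_le (f : RS.ChamberT → V) :
    ∃ b : ℝ, ∀ E E' : RS.ChamberT, ∀ γ ∈ RS.roots, γ (f E) - γ (f E') ≤ b := by
  have : Finite RS.roots := RS.finite.to_subtype
  obtain ⟨b, hb⟩ := (Set.finite_range fun p : RS.ChamberT × RS.ChamberT × RS.roots =>
    (p.2.2 : Dual ℝ V) (f p.1) - (p.2.2 : Dual ℝ V) (f p.2.1)).bddAbove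
  exact ⟨b, fun E E' γ hγ => hb ⟨(E, E', ⟨γ, hγ⟩), rfl⟩⟩

section Admissible

variable {RS} {C₀ : Set V} {Φ' : Set (Dual ℝ V)} {N : ℤ} {E E' : RS.ChamberT}
  {δ : Dual ℝ V}

lemma AdmissibleW.transl_mul_ordLE_of_regularWAt {w : RS.ChamberT → Equiv.Perm V}
    (hw : RS.AdmissibleW C₀ w) (hwW : ∀ C, w C ∈ RS.affWeyl)
    (hreg : RS.RegularWAt ((N : ℝ) + 2) w) (hδ : δ ∈ RS.simples E.1)
    (hE' : E'.1 = ⇑(RS.sAff δ 0) '' E.1) (hδ' : δ ∈ Φ') :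
    RS.ordLE (RS.pos C₀) Φ' (transl ((N : ℝ) • RS.coroot δ) * w E') (w E) := by
  have hneg := hreg E' (-δ) (hE' ▸ RS.neg_mem_pos_image_sAff hδ.1)
  simp only [piL, LinearMap.neg_apply] at hneg
  exact RS.transl_mul_ordLE_of_ordLE_singleton hδ.1.1 hδ'
    (RS.mapsAffineRoots_of_mem_affWeyl (hwW E)) (hw E δ hδ E' hE') (hreg E δ hδ.1) hneg

lemma AdmissibleW.ordLE_transl_mul_of_apply_sub_le {u : RS.ChamberT → Equiv.Perm V}
    (hu : RS.AdmissibleW C₀ u) (huW : ∀ C, u C ∈ RS.affWeyl)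
    (hdrop : δ (piL (u E)) - δ (piL (u E')) ≤ 2 * ((N : ℝ) - 2)) (hδ : δ ∈ RS.simples E.1)
    (hE' : E'.1 = ⇑(RS.sAff δ 0) '' E.1) (hδ' : δ ∈ Φ') :
    RS.ordLE (RS.pos C₀) Φ' (u E) (transl ((N : ℝ) • RS.coroot δ) * u E') :=
  RS.ordLE_transl_mul_of_ordLE_singleton hδ.1.1 hδ'
    (RS.mapsAffineRoots_of_mem_affWeyl (huW E)) (hu E δ hδ E' hE') hdrop

lemma exists_ordLE_of_gallery {u w : RS.ChamberT → Equiv.Perm V}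
    (huW : ∀ C, u C ∈ RS.affWeyl) (hu : RS.AdmissibleW C₀ u)
    (hwW : ∀ C, w C ∈ RS.affWeyl) (hw : RS.AdmissibleW C₀ w)
    (hreg : RS.RegularWAt ((N : ℝ) + 2) w)
    (hdrop : ∀ E E' : RS.ChamberT, ∀ γ ∈ RS.roots,
      γ (piL (u E)) - γ (piL (u E')) ≤ 2 * ((N : ℝ) - 2))
    {vC vD : V} (hvD : RS.IsRegularPt vD) {D : RS.ChamberT} (hD : D.1 = RS.chamberOf vD)
    {v : V} (hv : RS.IsRegularPt v) {E : RS.ChamberT} (hE : E.1 = RS.chamberOf v)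
    -- every wall separating `E` from `D` is the wall of a `C`-positive root
    (hsub : posAt RS.roots v \ posAt RS.roots vD ⊆ posAt RS.roots vC) :
    ∃ η ∈ RS.corootLattice,
      RS.ordLE (RS.pos C₀) (posAt RS.roots vC) (u E) (transl η * u D) ∧
      RS.ordLE (RS.pos C₀) (posAt RS.roots vC) (transl η * w D) (w E) := by
  refine RS.isSubsystem_roots.gallery_induction hvD
    (Q := fun v => posAt RS.roots v \ posAt RS.roots vD ⊆ posAt RS.roots vC →
      ∀ E : RS.ChamberT, E.1 = RS.chamberOf v → ∃ η ∈ RS.corootLattice,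
        RS.ordLE (RS.pos C₀) (posAt RS.roots vC) (u E) (transl η * u D) ∧
        RS.ordLE (RS.pos C₀) (posAt RS.roots vC) (transl η * w D) (w E))
    (fun v _ heq _ E hE => ?_) (fun v hv δ hδ hδD ih hsub E hE => ?_) hv hsub E hE
  · obtain rfl : E = D := Subtype.ext (by rw [hE, hD, RS.chamberOf_congr heq])
    refine ⟨0, zero_mem _, ?_⟩
    rw [transl_zero, one_mul, one_mul]
    exact ⟨.inl rfl, .inl rfl⟩
  have hδr : δ ∈ RS.roots := hδ.1.1
  have hδC : δ ∈ posAt RS.roots vC := hsub ⟨hδ.1, hδD⟩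
  let E' : RS.ChamberT := ⟨RS.chamberOf (RS.sAff δ 0 v),
    RS.isChamber_chamberOf (RS.regular_sAff hδr hv)⟩
  have hδE : δ ∈ RS.simples E.1 := by rwa [hE, simples_chamberOf]
  have hE' : E'.1 = ⇑(RS.sAff δ 0) '' E.1 := by rw [hE, RS.image_sAff_chamberOf hδr]
  obtain ⟨η, hη, huη, hwη⟩ := ih (by
    rw [RS.isSubsystem_roots.posAt_sAff_sdiff hv hvD hδ hδD]
    exact Set.sdiff_subset.trans hsub) E' rfl
  have hNδ := RS.smul_coroot_mem_corootLattice hδr N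
  refine ⟨(N : ℝ) • RS.coroot δ + η, add_mem hNδ hη, ?_, ?_⟩ <;> rw [transl_add, mul_assoc]
  · exact RS.ordLE_trans (hu.ordLE_transl_mul_of_apply_sub_le huW (hdrop E E' δ hδr) hδE hE' hδC)
      (RS.ordLE_transl_mul hNδ huη)
  · exact RS.ordLE_trans (RS.ordLE_transl_mul hNδ hwη)
      (hw.transl_mul_ordLE_of_regularWAt hwW hreg hδE hE' hδC)

end Admissible

end RootSystemData

theorem stmt13_general {V : Type*} [AddCommGroup V] [Module ℝ V]
    (RS : RootSystemData V) (C₀ : Set V)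
    (u : RS.ChamberT → Equiv.Perm V) (huW : ∀ C, u C ∈ RS.affWeyl)
    (hadm : RS.AdmissibleW C₀ u)
    (ψ : Module.Dual ℝ V) (ψv : V) (hψ : ∃ C : RS.ChamberT, RS.IsFundPair C.1 ψ ψv) :
    ∃ m : ℕ, ∀ w : RS.ChamberT → Equiv.Perm V, (∀ C, w C ∈ RS.affWeyl) →
      RS.AdmissibleW C₀ w → RS.RegularWAt (m : ℝ) w →
      ∀ μ ∈ RS.corootLattice,
        (∀ C : RS.ChamberT, RS.IsFundPair C.1 ψ ψv →
          RS.ordLE (RS.pos C₀) (RS.pos C.1 ∩ RS.phiZero ψv) (transl μ * u C) (w C)) →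
        ∀ C : RS.ChamberT,
          RS.ordLE (RS.pos C₀) (RS.pos C.1) (transl μ * u C) (w C) := by
  obtain ⟨b, hb⟩ := RS.exists_forall_root_apply_sub_le fun E => piL (u E)
  set N : ℕ := ⌈b / 2⌉₊ + 2
  have hdrop : ∀ E E' : RS.ChamberT, ∀ γ ∈ RS.roots,
      γ (piL (u E)) - γ (piL (u E')) ≤ 2 * (((N : ℤ) : ℝ) - 2) := fun E E' γ hγ => by
    have := Nat.le_ceil (b / 2)
    push_cast [N]
    linarith [hb E E' γ hγ]
  refine ⟨N + 2, fun w hwW hadmW hreg μ hμ hhyp C => ?_⟩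
  obtain ⟨vC, hvC, hC⟩ : ∃ v, RS.IsRegularPt v ∧ C.1 = RS.chamberOf v := C.2
  obtain ⟨⟨_, v₀, hv₀, rfl⟩, hD₀⟩ := hψ
  obtain ⟨vD, hvD, hψD, hmatch⟩ := RS.exists_isFundPair_posAt_phiZero_eq hv₀ hD₀ hvC
  let D : RS.ChamberT := ⟨RS.chamberOf vD, RS.isChamber_chamberOf hvD⟩
  have hD := RS.ordLE_mono (RS.pos_chamberOf_inter_subset_posAt (fun _ h => h.1) hmatch)
    (hhyp D hψD)
  obtain ⟨η, hη, hu, hw⟩ := RS.exists_ordLE_of_gallery huW hadm hwW hadmW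
    (by simpa using hreg) hdrop hvD (D := D) rfl hvC hC (fun α hα => hα.1)
  have hu := RS.ordLE_transl_mul hμ hu
  rw [← mul_assoc, transl_mul_comm, mul_assoc] at hu
  rw [hC, RS.pos_chamberOf]
  exact RS.ordLE_trans (RS.ordLE_trans hu (RS.ordLE_transl_mul hη hD)) hw

/-- Lemma 1.21: let `ū ∈ W̃^𝒞` be admissible and `ψ ∈ Ψ` (with
fundamental coweight `ψv`). Then there exists `m ∈ ℕ` such that for every
`m`-regular admissible tuple `w̄ ∈ W̃^𝒞` and every `μ ∈ Λ` with
`μ u_C ≤_{C^ψ} w_C` for all chambers `C ∋ ψ`, one has `μ u_C ≤_C w_C` for all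
chambers `C`. -/
theorem stmt13 {V : Type*} [AddCommGroup V] [Module ℝ V] [FiniteDimensional ℝ V]
    (RS : RootSystemData V) (C₀ : Set V) (hC₀ : RS.IsChamber C₀)
    (u : RS.ChamberT → Equiv.Perm V) (huW : ∀ C, u C ∈ RS.affWeyl)
    (hadm : RS.AdmissibleW C₀ u)
    (ψ : Module.Dual ℝ V) (ψv : V) (hψ : ∃ C : RS.ChamberT, RS.IsFundPair C.1 ψ ψv) :
    ∃ m : ℕ, ∀ w : RS.ChamberT → Equiv.Perm V, (∀ C, w C ∈ RS.affWeyl) →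
      RS.AdmissibleW C₀ w → RS.RegularWAt (m : ℝ) w →
      ∀ μ ∈ RS.corootLattice,
        (∀ C : RS.ChamberT, RS.IsFundPair C.1 ψ ψv →
          RS.ordLE (RS.pos C₀) (RS.pos C.1 ∩ RS.phiZero ψv) (transl μ * u C) (w C)) →
        ∀ C : RS.ChamberT,
          RS.ordLE (RS.pos C₀) (RS.pos C.1) (transl μ * u C) (w C) :=
  stmt13_general RS C₀ u huW hadm ψ ψv hψ
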